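/- arXiv:1202.3186 — 2 statements merged into one kernel-verified Lean document; each statement's English description precedes it below -/
import Mathlib

section
/- In R-Wythoff, G_R(1, a) = a and G_R(2, a) = a for all integers a ≥ 3. -/
noncomputable section

/-- The golden ratio. -/
def phi : ℝ := (1 + Real.sqrt 5) / 2

/-- Minimum excluded value of a set of naturals. -/
def mex (S : Set ℕ) : ℕ := sInf {n | n ∉ S}

/-- Sort a pair of naturals into nondecreasing order. -/
def sortPair (p : ℕ × ℕ) : ℕ × ℕ := (min p.1 p.2, max p.1 p.2)

/-- Moves of R-Wythoff (positions are unordered pairs of pile sizes): remove a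
positive number of tokens from the larger pile (either pile if equal), or an
equal positive number of tokens from both piles. -/
def RMove (p q : ℕ × ℕ) : Prop :=
  (∃ t < max p.1 p.2, sortPair q = sortPair (min p.1 p.2, t)) ∨
  (∃ k, 0 < k ∧ k ≤ min p.1 p.2 ∧ sortPair q = (min p.1 p.2 - k, max p.1 p.2 - k))

lemma RMove.sum_lt {p q : ℕ × ℕ} (h : RMove p q) : q.1 + q.2 < p.1 + p.2 := by
  rcases h with ⟨t, ht, hq⟩ | ⟨k, hk0, hk, hq⟩ <;>
  · simp only [sortPair, Prod.mk.injEq] at hq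
    omega

/-- Sprague–Grundy function of R-Wythoff. -/
noncomputable def grundyR : ℕ × ℕ → ℕ
  | p => mex {v | ∃ q, ∃ _ : RMove p q, grundyR q = v}
termination_by p => p.1 + p.2
decreasing_by exact RMove.sum_lt (by assumption)

/-- P-positions of R-Wythoff: a position is P iff every move leads to a
non-P (i.e. N) position. -/
def RPPos : ℕ × ℕ → Prop
  | p => ∀ q, RMove p q → ¬ RPPos q
termination_by p => p.1 + p.2
decreasing_by exact RMove.sum_lt (by assumption)

lemma grundyR_eq (p : ℕ × ℕ) : grundyR p = mex {v | ∃ q, ∃ _ : RMove p q, grundyR q = v} := by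
  rw [grundyR]

lemma mex_eq {S : Set ℕ} {n : ℕ} (h1 : n ∉ S) (h2 : ∀ m, m < n → m ∈ S) : mex S = n := by
  have hne : n ∈ {k | k ∉ S} := h1
  have hmem := Nat.sInf_mem (⟨n, hne⟩ : Set.Nonempty {k | k ∉ S})
  have hle := Nat.sInf_le hne
  have hnot : ¬ sInf {k | k ∉ S} < n := fun h => hmem (h2 _ h)
  unfold mex
  omega

lemma RMove_swap (a b : ℕ) (q : ℕ × ℕ) : RMove (b,a) q ↔ RMove (a,b) q := by
  simp [RMove, min_comm, max_comm]

lemma grundy_swap (a b : ℕ) : grundyR (b,a) = grundyR (a,b) := by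
  rw [grundyR_eq, grundyR_eq]
  congr 1
  ext v
  simp only [Set.mem_setOf_eq]
  constructor
  · rintro ⟨q, h, rfl⟩; exact ⟨q, (RMove_swap a b q).mp h, rfl⟩
  · rintro ⟨q, h, rfl⟩; exact ⟨q, (RMove_swap a b q).mpr h, rfl⟩

lemma grundy_sort {q : ℕ × ℕ} {x y : ℕ} (h : sortPair q = (x,y)) : grundyR q = grundyR (x,y) := by
  obtain ⟨a, b⟩ := q
  simp only [sortPair, Prod.mk.injEq] at h
  have : (a = x ∧ b = y) ∨ (a = y ∧ b = x) := by omega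
  rcases this with ⟨rfl, rfl⟩ | ⟨rfl, rfl⟩
  · rfl
  · exact grundy_swap _ _
lemma grundy_zero : ∀ n, grundyR (0, n) = n := by
  intro n
  induction n using Nat.strong_induction_on with
  | _ n ih =>
  rw [grundyR_eq]
  apply mex_eq
  · rintro ⟨q, hm, hv⟩
    rcases hm with ⟨t, ht, hq⟩ | ⟨k, hk0, hk, hq⟩
    · simp only [Nat.zero_min, Nat.max_comm] at hq ht
      have hq' : sortPair q = (0, t) := by
        rw [hq]; simp [sortPair]
      have ht' : t < n := by simpa using ht
      rw [grundy_sort hq', ih t ht'] at hv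
      omega
    · simp at hk; omega
  · intro m hm
    refine ⟨(0, m), Or.inl ⟨m, by simpa using hm, by simp [sortPair]⟩, ih m hm⟩
lemma grundy_11 : grundyR (1, 1) = 2 := by
  rw [grundyR_eq]
  apply mex_eq
  · rintro ⟨q, hm, hv⟩
    rcases hm with ⟨t, ht, hq⟩ | ⟨k, hk0, hk, hq⟩
    · simp only [show max (1,1).1 (1,1).2 = 1 from rfl] at ht
      interval_cases t
      have hq' : sortPair q = (0, 1) := by rw [hq]; simp [sortPair]
      rw [grundy_sort hq', grundy_zero 1] at hv
      omega
    · simp only [show min (1,1).1 (1,1).2 = 1 from rfl,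
        show max (1,1).1 (1,1).2 = 1 from rfl] at hk hq
      interval_cases k
      rw [grundy_sort hq, grundy_zero 0] at hv
      omega
  · intro m hm
    interval_cases m
    · exact ⟨(0, 0), Or.inr ⟨1, by omega, by simp, by simp [sortPair]⟩, grundy_zero 0⟩
    · exact ⟨(0, 1), Or.inl ⟨0, by simp, by simp [sortPair]⟩, grundy_zero 1⟩

lemma grundy_12 : grundyR (1, 2) = 0 := by
  rw [grundyR_eq]
  apply mex_eq
  · rintro ⟨q, hm, hv⟩
    rcases hm with ⟨t, ht, hq⟩ | ⟨k, hk0, hk, hq⟩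
    · simp only [show max (1,2).1 (1,2).2 = 2 from rfl,
        show min (1,2).1 (1,2).2 = 1 from rfl] at ht hq
      interval_cases t
      · have hq' : sortPair q = (0, 1) := by rw [hq]; simp [sortPair]
        rw [grundy_sort hq', grundy_zero 1] at hv
        omega
      · have hq' : sortPair q = (1, 1) := by rw [hq]; simp [sortPair]
        rw [grundy_sort hq', grundy_11] at hv
        omega
    · simp only [show min (1,2).1 (1,2).2 = 1 from rfl,
        show max (1,2).1 (1,2).2 = 2 from rfl] at hk hq
      interval_cases k
      rw [grundy_sort hq, grundy_zero 1] at hv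
      omega
  · intro m hm
    omega

lemma grundy_22 : grundyR (2, 2) = 1 := by
  rw [grundyR_eq]
  apply mex_eq
  · rintro ⟨q, hm, hv⟩
    rcases hm with ⟨t, ht, hq⟩ | ⟨k, hk0, hk, hq⟩
    · simp only [show max (2,2).1 (2,2).2 = 2 from rfl,
        show min (2,2).1 (2,2).2 = 2 from rfl] at ht hq
      interval_cases t
      · have hq' : sortPair q = (0, 2) := by rw [hq]; simp [sortPair]
        rw [grundy_sort hq', grundy_zero 2] at hv
        omega
      · have hq' : sortPair q = (1, 2) := by rw [hq]; simp [sortPair]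
        rw [grundy_sort hq', grundy_12] at hv
        omega
    · simp only [show min (2,2).1 (2,2).2 = 2 from rfl,
        show max (2,2).1 (2,2).2 = 2 from rfl] at hk hq
      interval_cases k
      · rw [grundy_sort hq, grundy_11] at hv
        omega
      · rw [grundy_sort hq, grundy_zero 0] at hv
        omega
  · intro m hm
    interval_cases m
    exact ⟨(1, 2), Or.inl ⟨1, by simp, by simp [sortPair]⟩, grundy_12⟩
lemma grundy_1a : ∀ a, 3 ≤ a → grundyR (1, a) = a := by
  intro a
  induction a using Nat.strong_induction_on with
  | _ a ih =>
  intro ha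
  have hmin : min (1,a).1 (1,a).2 = 1 := by simp <;> omega
  have hmax : max (1,a).1 (1,a).2 = a := by simp <;> omega
  rw [grundyR_eq]
  apply mex_eq
  · rintro ⟨q, hm, hv⟩
    rcases hm with ⟨t, ht, hq⟩ | ⟨k, hk0, hk, hq⟩
    · rw [hmax] at ht
      rw [hmin] at hq
      rcases Nat.lt_or_ge t 3 with h3 | h3
      · interval_cases t
        · have hq' : sortPair q = (0,1) := by rw [hq]; simp [sortPair]
          rw [grundy_sort hq', grundy_zero 1] at hv; omega
        · have hq' : sortPair q = (1,1) := by rw [hq]; simp [sortPair]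
          rw [grundy_sort hq', grundy_11] at hv; omega
        · have hq' : sortPair q = (1,2) := by rw [hq]; simp [sortPair]
          rw [grundy_sort hq', grundy_12] at hv; omega
      · have hq' : sortPair q = (1,t) := by
          rw [hq]; simp [sortPair, Prod.mk.injEq]; omega
        rw [grundy_sort hq', ih t ht h3] at hv; omega
    · rw [hmin] at hk hq; rw [hmax] at hq
      interval_cases k
      rw [grundy_sort hq, grundy_zero (a-1)] at hv; omega
  · intro m hm
    rcases Nat.lt_or_ge m 3 with h3 | h3
    · interval_cases m
      · exact ⟨(1,2), Or.inl ⟨2, by simp <;> omega,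
          by simp only [sortPair, Prod.mk.injEq, Prod.fst, Prod.snd]; constructor <;> omega⟩, grundy_12⟩
      · exact ⟨(0,1), Or.inl ⟨0, by simp <;> omega,
          by simp only [sortPair, Prod.mk.injEq, Prod.fst, Prod.snd]; constructor <;> omega⟩, grundy_zero 1⟩
      · exact ⟨(1,1), Or.inl ⟨1, by simp <;> omega,
          by simp only [sortPair, Prod.mk.injEq, Prod.fst, Prod.snd]; constructor <;> omega⟩, grundy_11⟩
    · exact ⟨(1,m), Or.inl ⟨m, by simp <;> omega,
        by simp only [sortPair, Prod.mk.injEq, Prod.fst, Prod.snd]; constructor <;> omega⟩, ih m hm h3⟩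

lemma grundy_2a : ∀ a, 3 ≤ a → grundyR (2, a) = a := by
  intro a
  induction a using Nat.strong_induction_on with
  | _ a ih =>
  intro ha
  have hmin : min (2,a).1 (2,a).2 = 2 := by simp <;> omega
  have hmax : max (2,a).1 (2,a).2 = a := by simp <;> omega
  rw [grundyR_eq]
  apply mex_eq
  · rintro ⟨q, hm, hv⟩
    rcases hm with ⟨t, ht, hq⟩ | ⟨k, hk0, hk, hq⟩
    · rw [hmax] at ht
      rw [hmin] at hq
      rcases Nat.lt_or_ge t 3 with h3 | h3
      · interval_cases t
        · have hq' : sortPair q = (0,2) := by rw [hq]; simp [sortPair]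
          rw [grundy_sort hq', grundy_zero 2] at hv; omega
        · have hq' : sortPair q = (1,2) := by rw [hq]; simp [sortPair]
          rw [grundy_sort hq', grundy_12] at hv; omega
        · have hq' : sortPair q = (2,2) := by rw [hq]; simp [sortPair]
          rw [grundy_sort hq', grundy_22] at hv; omega
      · have hq' : sortPair q = (2,t) := by
          rw [hq]; simp [sortPair, Prod.mk.injEq]; omega
        rw [grundy_sort hq', ih t ht h3] at hv; omega
    · rw [hmin] at hk hq; rw [hmax] at hq
      interval_cases k
      · -- q sorted = (1, a-1)
        rcases Nat.lt_or_ge a 4 with h4 | h4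
        · have ha3 : a = 3 := by omega
          subst ha3
          rw [grundy_sort hq, grundy_12] at hv; omega
        · have h13 : 3 ≤ a - 1 := by omega
          rw [grundy_sort hq, grundy_1a (a-1) h13] at hv; omega
      · rw [grundy_sort hq, grundy_zero (a-2)] at hv; omega
  · intro m hm
    rcases Nat.lt_or_ge m 3 with h3 | h3
    · interval_cases m
      · exact ⟨(1,2), Or.inl ⟨1, by simp <;> omega,
          by simp only [sortPair, Prod.mk.injEq, Prod.fst, Prod.snd]; constructor <;> omega⟩, grundy_12⟩
      · exact ⟨(2,2), Or.inl ⟨2, by simp <;> omega,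
          by simp only [sortPair, Prod.mk.injEq, Prod.fst, Prod.snd]; constructor <;> omega⟩, grundy_22⟩
      · exact ⟨(0,2), Or.inl ⟨0, by simp <;> omega,
          by simp only [sortPair, Prod.mk.injEq, Prod.fst, Prod.snd]; constructor <;> omega⟩, grundy_zero 2⟩
    · exact ⟨(2,m), Or.inl ⟨m, by simp <;> omega,
        by simp only [sortPair, Prod.mk.injEq, Prod.fst, Prod.snd]; constructor <;> omega⟩, ih m hm h3⟩

/-- In R-Wythoff, `G_R(1, a) = G_R(2, a) = a` for `a ≥ 3`. -/
theorem RWythoff_rows_one_two (a : ℕ) (ha : 3 ≤ a) :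
    grundyR (1, a) = a ∧ grundyR (2, a) = a := by
  exact ⟨grundy_1a a ha, grundy_2a a ha⟩

end
end

section
/- In E-Wythoff, a position (a,b) with a ≤ b has Sprague–Grundy value 1 if and only if (a,b) = (⌊φn⌋ − 1, ⌊φn⌋ + n − 1) for some integer n ≥ 1, where φ = (1+√5)/2. -/
noncomputable section

/-- Moves of E-Wythoff (positions are unordered pairs of pile sizes): remove a
positive number of tokens from one pile, an equal positive number from both
piles, or `k` tokens from the smaller pile and `l` from the larger pile where
`k > l ≥ 0`. -/
def EMove (p q : ℕ × ℕ) : Prop :=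
  (∃ t < max p.1 p.2, sortPair q = sortPair (min p.1 p.2, t)) ∨
  (∃ t < min p.1 p.2, sortPair q = sortPair (t, max p.1 p.2)) ∨
  (∃ k, 0 < k ∧ k ≤ min p.1 p.2 ∧ sortPair q = (min p.1 p.2 - k, max p.1 p.2 - k)) ∨
  (∃ k l, l < k ∧ k ≤ min p.1 p.2 ∧ sortPair q = sortPair (min p.1 p.2 - k, max p.1 p.2 - l))

lemma EMove.sum_lt {p q : ℕ × ℕ} (h : EMove p q) : q.1 + q.2 < p.1 + p.2 := by
  rcases h with ⟨t, ht, hq⟩ | ⟨t, ht, hq⟩ | ⟨k, hk0, hk, hq⟩ | ⟨k, l, hlk, hk, hq⟩ <;>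
  · simp only [sortPair, Prod.mk.injEq] at hq
    omega

/-- Sprague–Grundy function of E-Wythoff. -/
noncomputable def grundyE : ℕ × ℕ → ℕ
  | p => mex {v | ∃ q, ∃ _ : EMove p q, grundyE q = v}
termination_by p => p.1 + p.2
decreasing_by exact EMove.sum_lt (by assumption)

/-- P-positions of E-Wythoff. -/
def EPPos : ℕ × ℕ → Prop
  | p => ∀ q, EMove p q → ¬ EPPos q
termination_by p => p.1 + p.2
decreasing_by exact EMove.sum_lt (by assumption)

/-!
The positions of value 0 are those of Wythoff's game, `(⌊nφ⌋, ⌊nφ⌋ + n)` for `n ≥ 0`, and the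
positions of value 1 are these pairs shifted by `(-1, -1)` for `n ≥ 1`. Each family is checked
against the mex recursion by strong induction on `a + b`: no move stays inside it, each of its
positions can move into the lower level, and every other position outside the lower level has a
move into it. These facts reduce to `⌊nφ⌋` being strictly increasing and, with
`⌊nφ⌋ + n = ⌊nφ²⌋`, partitioning the positive integers (Rayleigh's theorem).
-/

lemma grundyE_eq_mex (p : ℕ × ℕ) :
    grundyE p = mex {v | ∃ q, EMove p q ∧ grundyE q = v} := by
  rw [grundyE]
  simp only [exists_prop]

lemma mex_eq_iff {S : Set ℕ} (hS : S.Finite) {k : ℕ} : mex S = k ↔ (∀ j < k, j ∈ S) ∧ k ∉ S := by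
  have hne : {n | n ∉ S}.Nonempty := hS.exists_notMem
  constructor
  · rintro rfl
    exact ⟨fun j hj => not_not.1 (Nat.notMem_of_lt_sInf hj), Nat.sInf_mem hne⟩
  · rintro ⟨hlt, hk⟩
    refine le_antisymm (Nat.sInf_le hk) (not_lt.1 fun h => ?_)
    exact Nat.sInf_mem hne (hlt _ h)

lemma finite_grundyE_followers (p : ℕ × ℕ) :
    {v | ∃ q, EMove p q ∧ grundyE q = v}.Finite := by
  have hq : {q : ℕ × ℕ | EMove p q}.Finite := by
    refine ((Set.finite_Iio (p.1 + p.2)).prod (Set.finite_Iio (p.1 + p.2))).subset ?_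
    intro q hq
    have := hq.sum_lt
    simp only [Set.mem_prod, Set.mem_Iio]
    omega
  refine (hq.image grundyE).subset ?_
  rintro v ⟨q, hm, rfl⟩
  exact ⟨q, hm, rfl⟩

lemma eMove_sortPair_left (p q : ℕ × ℕ) : EMove (sortPair p) q ↔ EMove p q := by
  simp only [EMove, sortPair, min_eq_left min_le_max, max_eq_right min_le_max]

lemma eMove_sortPair_right (p q : ℕ × ℕ) : EMove p (sortPair q) ↔ EMove p q := by
  have h : sortPair (sortPair q) = sortPair q := by
    simp only [sortPair, min_eq_left min_le_max, max_eq_right min_le_max]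
  simp only [EMove, h]

lemma grundyE_sortPair (p : ℕ × ℕ) : grundyE (sortPair p) = grundyE p := by
  simp only [grundyE_eq_mex (sortPair p), grundyE_eq_mex p, eMove_sortPair_left]

/-- The three disjuncts: the follower keeps `a` as its smaller pile, has `a` as its larger pile,
or loses at least as many tokens from `a` as from `b`. -/
def SortedEMove (a b x y : ℕ) : Prop :=
  (x = a ∧ a ≤ y ∧ y < b) ∨ (y = a ∧ x < a) ∨ (x < a ∧ y ≤ b ∧ b - y ≤ a - x)

lemma SortedEMove.add_lt {a b x y : ℕ} (h : SortedEMove a b x y) (hab : a ≤ b) :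
    x + y < a + b := by
  unfold SortedEMove at h
  omega

lemma eMove_iff_sortedEMove {a b x y : ℕ} (hab : a ≤ b) (hxy : x ≤ y) :
    EMove (a, b) (x, y) ↔ SortedEMove a b x y := by
  simp only [EMove, SortedEMove, sortPair, Prod.mk.injEq, min_eq_left hab, max_eq_right hab,
    min_eq_left hxy, max_eq_right hxy]
  constructor
  · rintro (⟨t, ht, hq⟩ | ⟨t, ht, hq⟩ | ⟨k, hk0, hk, hq⟩ | ⟨k, l, hlk, hk, hq⟩) <;> omega
  · rintro (h | h | h)
    · exact Or.inl ⟨y, by omega, by omega, by omega⟩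
    · exact Or.inl ⟨x, by omega, by omega, by omega⟩
    · by_cases hd : b - y = a - x
      · exact Or.inr (Or.inr (Or.inl ⟨a - x, by omega, by omega, by omega, by omega⟩))
      · exact Or.inr (Or.inr (Or.inr ⟨a - x, b - y, by omega, by omega, by omega, by omega⟩))

lemma grundyE_eq_iff {a b : ℕ} (hab : a ≤ b) {k : ℕ} :
    grundyE (a, b) = k ↔
      (∀ j < k, ∃ x y, x ≤ y ∧ SortedEMove a b x y ∧ grundyE (x, y) = j) ∧
        ∀ x y, x ≤ y → SortedEMove a b x y → grundyE (x, y) ≠ k := by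
  have hvals : ∀ j, j ∈ {v | ∃ q, EMove (a, b) q ∧ grundyE q = v} ↔
      ∃ x y, x ≤ y ∧ SortedEMove a b x y ∧ grundyE (x, y) = j := by
    intro j
    constructor
    · rintro ⟨q, hm, rfl⟩
      refine ⟨_, _, min_le_max, ?_, grundyE_sortPair q⟩
      exact (eMove_iff_sortedEMove hab min_le_max).1 ((eMove_sortPair_right _ q).2 hm)
    · rintro ⟨x, y, hxy, hm, rfl⟩
      exact ⟨(x, y), (eMove_iff_sortedEMove hab hxy).2 hm, rfl⟩
  rw [grundyE_eq_mex, mex_eq_iff (finite_grundyE_followers _)]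
  simp only [hvals, not_exists, not_and, ne_eq]

lemma grundyE_eq_iff_of_recursion {k : ℕ} {S : ℕ → ℕ → Prop}
    (hS : ∀ a b, a ≤ b → (S a b ↔
      (∀ j < k, ∃ x y, x ≤ y ∧ SortedEMove a b x y ∧ grundyE (x, y) = j) ∧
        ∀ x y, x ≤ y → SortedEMove a b x y → ¬ S x y))
    {a b : ℕ} (hab : a ≤ b) : grundyE (a, b) = k ↔ S a b := by
  induction hs : a + b using Nat.strong_induction_on generalizing a b with
  | _ s IH =>
    rw [grundyE_eq_iff hab, hS a b hab]
    refine and_congr_right fun _ => forall₂_congr fun x y => imp_congr_right fun hxy =>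
      forall_congr' fun hm => not_congr ?_
    exact IH (x + y) (hs ▸ hm.add_lt hab) hxy rfl

lemma phi_pos : 0 < phi := Real.goldenRatio_pos

lemma one_lt_phi : 1 < phi := Real.one_lt_goldenRatio

lemma phi_lt_two : phi < 2 := Real.goldenRatio_lt_two

lemma irrational_phi : Irrational phi := Real.goldenRatio_irrational

lemma holderConjugate_phi : phi.HolderConjugate (phi + 1) := by
  have hphi : phi ^ 2 = phi + 1 := Real.goldenRatio_sq
  rw [Real.holderConjugate_iff]
  refine ⟨one_lt_phi, ?_⟩
  have : phi + 1 ≠ 0 := by linarith [phi_pos]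
  field_simp [phi_pos.ne']
  linarith

lemma natCast_mem_beattySeq_iff {r : ℝ} (hr : 0 ≤ r) (c : ℕ) :
    (c : ℤ) ∈ {beattySeq r k | k > 0} ↔ ∃ m : ℕ, 0 < m ∧ ⌊(m : ℝ) * r⌋₊ = c := by
  have hfloor : ∀ m : ℕ, (⌊(m : ℝ) * r⌋₊ : ℤ) = beattySeq r m := fun m =>
    Int.natCast_floor_eq_floor (by positivity)
  constructor
  · rintro ⟨k, hk, hkc⟩
    lift k to ℕ using hk.le
    exact ⟨k, by exact_mod_cast hk, by rw [← Nat.cast_inj (R := ℤ), hfloor, hkc]⟩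
  · rintro ⟨m, hm, rfl⟩
    exact ⟨m, by exact_mod_cast hm, (hfloor m).symm⟩

def lowerWythoff (n : ℕ) : ℕ := ⌊phi * n⌋₊

@[simp]
lemma lowerWythoff_zero : lowerWythoff 0 = 0 := by
  simp [lowerWythoff]

lemma lowerWythoff_one : lowerWythoff 1 = 1 := by
  rw [lowerWythoff, Nat.cast_one, mul_one, Nat.floor_eq_iff phi_pos.le]
  exact ⟨by norm_num [one_lt_phi.le], by norm_num [phi_lt_two]⟩

lemma le_lowerWythoff (n : ℕ) : n ≤ lowerWythoff n :=
  Nat.le_floor (le_mul_of_one_le_left n.cast_nonneg one_lt_phi.le)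

lemma lowerWythoff_strictMono : StrictMono lowerWythoff := by
  refine strictMono_nat_of_lt_succ fun n => ?_
  rw [lowerWythoff, lowerWythoff, Nat.lt_iff_add_one_le,
    ← Nat.floor_add_one (mul_nonneg phi_pos.le n.cast_nonneg)]
  refine Nat.floor_le_floor ?_
  push_cast
  nlinarith [one_lt_phi]

/-- Rayleigh's theorem for `φ` and `φ + 1 = φ²`. -/
lemma exists_lowerWythoff_eq_iff {c : ℕ} (hc : 0 < c) :
    (∃ m, 0 < m ∧ lowerWythoff m = c) ↔ ¬ ∃ m, 0 < m ∧ lowerWythoff m + m = c := by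
  have h : (c : ℤ) ∈ {n : ℤ | 0 < n} := by simpa using hc
  rw [← Irrational.beattySeq_symmDiff_beattySeq_pos holderConjugate_phi irrational_phi,
    Set.mem_symmDiff, natCast_mem_beattySeq_iff phi_pos.le,
    natCast_mem_beattySeq_iff (by linarith [phi_pos])] at h
  have hA : ∀ m : ℕ, ⌊(m : ℝ) * phi⌋₊ = lowerWythoff m := fun m => by
    rw [mul_comm, lowerWythoff]
  have hB : ∀ m : ℕ, ⌊(m : ℝ) * (phi + 1)⌋₊ = lowerWythoff m + m := fun m => by
    rw [mul_add_one, Nat.floor_add_natCast (mul_nonneg m.cast_nonneg phi_pos.le), hA]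
  simp only [hA, hB] at h
  rcases h with ⟨hlow, hup⟩ | ⟨hup, hlow⟩
  · exact iff_of_true hlow hup
  · exact iff_of_false hlow (not_not.2 hup)

lemma exists_eq_lowerWythoff_or_eq_upper (c : ℕ) :
    (∃ m, c = lowerWythoff m) ∨ ∃ m, 0 < m ∧ c = lowerWythoff m + m := by
  rcases Nat.eq_zero_or_pos c with rfl | hc
  · exact Or.inl ⟨0, lowerWythoff_zero.symm⟩
  by_cases hup : ∃ m, 0 < m ∧ lowerWythoff m + m = c
  · obtain ⟨m, hm, rfl⟩ := hup
    exact Or.inr ⟨m, hm, rfl⟩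
  · obtain ⟨m, -, rfl⟩ := (exists_lowerWythoff_eq_iff hc).2 hup
    exact Or.inl ⟨m, rfl⟩

lemma lowerWythoff_ne_upper (m : ℕ) {k : ℕ} (hk : 0 < k) :
    lowerWythoff m ≠ lowerWythoff k + k := by
  intro h
  have hc : 0 < lowerWythoff m := by omega
  have hm : 0 < m := Nat.pos_of_ne_zero fun hm => by simp [hm] at hc
  exact (exists_lowerWythoff_eq_iff hc).1 ⟨m, hm, rfl⟩ ⟨k, hk, h.symm⟩

/-- `n = 0` gives the terminal position `(0, 0)`. -/
def IsWythoffPair (a b : ℕ) : Prop := ∃ n, a = lowerWythoff n ∧ b = lowerWythoff n + n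

def IsShiftedWythoffPair (a b : ℕ) : Prop :=
  ∃ n, 0 < n ∧ a + 1 = lowerWythoff n ∧ b + 1 = lowerWythoff n + n

lemma IsWythoffPair.not_sortedEMove {a b x y : ℕ} (hP : IsWythoffPair a b)
    (hP' : IsWythoffPair x y) : ¬ SortedEMove a b x y := by
  obtain ⟨n, rfl, rfl⟩ := hP
  obtain ⟨m, rfl, rfl⟩ := hP'
  have hlt := lowerWythoff_strictMono.lt_iff_lt (a := m) (b := n)
  have hne : 0 < m → lowerWythoff n ≠ lowerWythoff m + m := lowerWythoff_ne_upper n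
  unfold SortedEMove
  omega

lemma exists_sortedEMove_isWythoffPair {a b : ℕ} (hab : a ≤ b) (hP : ¬ IsWythoffPair a b) :
    ∃ x y, x ≤ y ∧ SortedEMove a b x y ∧ IsWythoffPair x y := by
  unfold SortedEMove
  rcases exists_eq_lowerWythoff_or_eq_upper a with ⟨m, rfl⟩ | ⟨m, hm, rfl⟩
  · have hb : b ≠ lowerWythoff m + m := fun hb => hP ⟨m, rfl, hb⟩
    have := le_lowerWythoff m
    rcases lt_or_gt_of_ne hb with hb | hb
    · have hlt := lowerWythoff_strictMono (show b - lowerWythoff m < m by omega)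
      exact ⟨_, _, by omega, by omega, b - lowerWythoff m, rfl, rfl⟩
    · exact ⟨_, _, by omega, by omega, m, rfl, rfl⟩
  · have := le_lowerWythoff m
    exact ⟨_, _, by omega, by omega, m, rfl, rfl⟩

lemma IsShiftedWythoffPair.not_sortedEMove {a b x y : ℕ} (hQ : IsShiftedWythoffPair a b)
    (hQ' : IsShiftedWythoffPair x y) : ¬ SortedEMove a b x y := by
  obtain ⟨n, hn, ha, hb⟩ := hQ
  obtain ⟨m, hm, hx, hy⟩ := hQ'
  have hlt := lowerWythoff_strictMono.lt_iff_lt (a := m) (b := n)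
  have hne := lowerWythoff_ne_upper n hm
  unfold SortedEMove
  omega

lemma IsShiftedWythoffPair.exists_sortedEMove_isWythoffPair {a b : ℕ}
    (hQ : IsShiftedWythoffPair a b) :
    ∃ x y, x ≤ y ∧ SortedEMove a b x y ∧ IsWythoffPair x y := by
  obtain ⟨n, hn, ha, hb⟩ := hQ
  unfold SortedEMove
  rcases exists_eq_lowerWythoff_or_eq_upper a with ⟨m, rfl⟩ | ⟨m, hm, rfl⟩
  · have hmn : m < n := lowerWythoff_strictMono.lt_iff_lt.1 (by omega)
    exact ⟨_, _, by omega, by omega, m, rfl, rfl⟩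
  · have := le_lowerWythoff m
    exact ⟨_, _, by omega, by omega, m, rfl, rfl⟩

lemma exists_sortedEMove_isShiftedWythoffPair {a b : ℕ} (hab : a ≤ b)
    (hP : ¬ IsWythoffPair a b) (hQ : ¬ IsShiftedWythoffPair a b) :
    ∃ x y, x ≤ y ∧ SortedEMove a b x y ∧ IsShiftedWythoffPair x y := by
  have hQ01 : IsShiftedWythoffPair 0 1 :=
    ⟨1, one_pos, lowerWythoff_one.symm, by rw [lowerWythoff_one]⟩
  unfold SortedEMove
  rcases eq_or_lt_of_le hab with rfl | hab
  · have ha : a ≠ 0 := by rintro rfl; exact hP ⟨0, by simp, by simp⟩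
    exact ⟨0, 1, by omega, by omega, hQ01⟩
  rcases exists_eq_lowerWythoff_or_eq_upper (a + 1) with ⟨m, hm⟩ | ⟨m, hm, hma⟩
  · have hm0 : 0 < m := Nat.pos_of_ne_zero fun hm0 => by simp [hm0] at hm
    have hb : b ≠ a + m := fun hb => hQ ⟨m, hm0, hm, by omega⟩
    rcases lt_or_gt_of_ne hb with hb | hb
    · have hlt := lowerWythoff_strictMono (show b - a < m by omega)
      have := le_lowerWythoff (b - a)
      exact ⟨lowerWythoff (b - a) - 1, lowerWythoff (b - a) + (b - a) - 1, by omega, by omega,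
        b - a, by omega, by omega, by omega⟩
    · exact ⟨a, a + m, by omega, by omega, m, hm0, hm, by omega⟩
  · have := le_lowerWythoff m
    exact ⟨lowerWythoff m - 1, a, by omega, by omega, m, hm, by omega, by omega⟩

lemma grundyE_eq_zero_iff {a b : ℕ} (hab : a ≤ b) : grundyE (a, b) = 0 ↔ IsWythoffPair a b := by
  refine grundyE_eq_iff_of_recursion (fun a b hab => ⟨fun hP => ?_, fun ⟨_, hfree⟩ => ?_⟩) hab
  · exact ⟨fun j hj => absurd hj j.not_lt_zero, fun x y _ hm hP' => hP.not_sortedEMove hP' hm⟩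
  · by_contra hP
    obtain ⟨x, y, hxy, hm, hP'⟩ := exists_sortedEMove_isWythoffPair hab hP
    exact hfree x y hxy hm hP'

lemma grundyE_eq_one_iff {a b : ℕ} (hab : a ≤ b) :
    grundyE (a, b) = 1 ↔ IsShiftedWythoffPair a b := by
  refine grundyE_eq_iff_of_recursion (fun a b hab => ?_) hab
  have hzero : (∀ j < 1, ∃ x y, x ≤ y ∧ SortedEMove a b x y ∧ grundyE (x, y) = j) ↔
      ∃ x y, x ≤ y ∧ SortedEMove a b x y ∧ IsWythoffPair x y := by
    simp only [Nat.lt_one_iff, forall_eq]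
    exact exists₂_congr fun x y => and_congr_right fun hxy => and_congr_right fun _ =>
      grundyE_eq_zero_iff hxy
  rw [hzero]
  refine ⟨fun hQ => ⟨hQ.exists_sortedEMove_isWythoffPair, fun x y _ hm hQ' => ?_⟩,
    fun ⟨⟨x, y, _, hm, hP'⟩, hfree⟩ => ?_⟩
  · exact hQ.not_sortedEMove hQ' hm
  · have hP : ¬ IsWythoffPair a b := fun hP => hP.not_sortedEMove hP' hm
    by_contra hQ
    obtain ⟨x', y', hxy', hm', hQ'⟩ := exists_sortedEMove_isShiftedWythoffPair hab hP hQ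
    exact hfree x' y' hxy' hm' hQ'

/-- In E-Wythoff, `(a,b)` with `a ≤ b` has Sprague–Grundy value 1 iff
`(a,b) = (⌊φn⌋ - 1, ⌊φn⌋ + n - 1)` for some `n ≥ 1`. -/
theorem EWythoff_grundy_value_one (a b : ℕ) (hab : a ≤ b) :
    grundyE (a, b) = 1 ↔
      ∃ n : ℕ, 0 < n ∧ (a, b) = (⌊phi * n⌋₊ - 1, ⌊phi * n⌋₊ + n - 1) := by
  rw [grundyE_eq_one_iff hab]
  refine exists_congr fun n => and_congr_right fun hn => ?_
  have := le_lowerWythoff n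
  rw [Prod.mk.injEq, ← lowerWythoff]
  omega

end
end
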